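/- arXiv:2007.00104 — 2 statements merged into one kernel-verified Lean document; each statement's English description precedes it below -/
import Mathlib

section
/- For a geometric number of attempts truncated at K with success probability P ∈ (0,1], the second moment of the number of attempts L = min(G,K) equals L̄ + 2(1-P)/P² − 2(1-P)^K (K − (1-P)(K−1))/P², where L̄ = (1-(1-P)^K)/P is the first moment. -/
/-!
Split `E[L²] = ∑ min(k+1,K)² qᵏ P` (with `q = 1 - P`) at `k = K`. From `K` on the terms are
`K² qᵏ P`, a geometric tail summing to `K² q^K`; the first `K` terms form the finite sum
`∑_{k<K} (k+1)² qᵏ`, whose closed form (times `(1-q)³`) follows by induction on `K`.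
-/

open Finset

lemma sum_range_succ_sq_mul_pow_mul_one_sub_pow_three {R : Type*} [CommRing R] (q : R) (n : ℕ) :
    (∑ k ∈ range n, ((k : R) + 1) ^ 2 * q ^ k) * (1 - q) ^ 3 =
      1 + q - q ^ n * (((n : R) + 1) ^ 2 - (2 * (n : R) ^ 2 + 2 * n - 1) * q
        + (n : R) ^ 2 * q ^ 2) := by
  induction n with
  | zero => simp
  | succ n ih =>
    rw [sum_range_succ, add_mul, ih]
    push_cast
    ring

lemma min_add_succ_sq_mul_pow (q : ℝ) (K i : ℕ) :
    (min ((i + K : ℕ) + 1) K : ℝ) ^ 2 * q ^ (i + K) = K ^ 2 * q ^ K * q ^ i := by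
  rw [min_eq_right (by push_cast; linarith [(i.cast_nonneg : (0 : ℝ) ≤ i)]), pow_add]
  ring

lemma tsum_min_succ_sq_mul_pow {q : ℝ} (hq : |q| < 1) (K : ℕ) :
    ∑' k : ℕ, (min (k + 1) K : ℝ) ^ 2 * q ^ k =
      ∑ k ∈ range K, ((k : ℝ) + 1) ^ 2 * q ^ k + K ^ 2 * q ^ K / (1 - q) := by
  have hshift := min_add_succ_sq_mul_pow q K
  have htail : Summable fun i : ℕ => (K : ℝ) ^ 2 * q ^ K * q ^ i :=
    (summable_geometric_of_abs_lt_one hq).mul_left _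
  have hsum : Summable fun k : ℕ => (min (k + 1) K : ℝ) ^ 2 * q ^ k :=
    (summable_nat_add_iff K).mp (by simpa only [hshift] using htail)
  rw [← hsum.sum_add_tsum_nat_add K]
  congr 1
  · refine sum_congr rfl fun k hk => ?_
    rw [min_eq_left (by exact_mod_cast mem_range.mp hk)]
  · simp only [hshift, tsum_mul_left, tsum_geometric_of_abs_lt_one hq, div_eq_mul_inv]

theorem truncated_geometric_second_moment_general (P : ℝ) (hP0 : 0 < P) (hP1 : P ≤ 1)
    (K : ℕ) :
    ∑' k : ℕ, (min (k + 1) K : ℝ) ^ 2 * ((1 - P) ^ k * P) =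
      (1 - (1 - P) ^ K) / P + 2 * (1 - P) / P ^ 2
        - 2 * (1 - P) ^ K * ((K : ℝ) - (1 - P) * ((K : ℝ) - 1)) / P ^ 2 := by
  have hq : |1 - P| < 1 := by rw [abs_lt]; constructor <;> linarith
  have hhead := sum_range_succ_sq_mul_pow_mul_one_sub_pow_three (1 - P) K
  simp only [← mul_assoc, tsum_mul_right, tsum_min_succ_sq_mul_pow hq, sub_sub_cancel] at hhead ⊢
  rw [← eq_div_iff (by positivity)] at hhead
  rw [hhead]
  field_simp
  ring

/-- Second moment of the truncated geometric number of attempts `L = min(G,K)`: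
`E[L²] = E[L] + 2(1-P)/P² − 2(1-P)^K (K − (1-P)(K−1))/P²`. -/
theorem truncated_geometric_second_moment (P : ℝ) (hP0 : 0 < P) (hP1 : P ≤ 1)
    (K : ℕ) (hK : 1 ≤ K) :
    ∑' k : ℕ, (min (k + 1) K : ℝ) ^ 2 * ((1 - P) ^ k * P) =
      (1 - (1 - P) ^ K) / P + 2 * (1 - P) / P ^ 2
        - 2 * (1 - P) ^ K * ((K : ℝ) - (1 - P) * ((K : ℝ) - 1)) / P ^ 2 :=
  truncated_geometric_second_moment_general P hP0 hP1 K
end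

section
/- For two UAVs flying on concentric circles of radii r_i, r_j > 0 with uniformly distributed independent angular phase difference, the probability that their separation distance is at most d_tx equals (1/π)·arccos((r_i² + r_j² − d_tx²)/(2 r_i r_j)), provided |r_i − r_j| ≤ d_tx ≤ r_i + r_j. -/
/-!
By the law of cosines the distance is at most `d` exactly when `cos φ ≥ c`, with
`c = (rᵢ² + rⱼ² − d²)/(2 rᵢ rⱼ)`. Over one period this superlevel set of the cosine is
`[0, α] ∪ [2π − α, 2π)` with `α = arccos c`, of length `2α`; for `c` outside `[-1, 1]` the set
is empty or the whole period, matching `arccos c = 0` or `π`.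
-/

open Real MeasureTheory Set

namespace Real

theorem cos_le_cos_iff_of_mem_Ico_two_pi {α φ : ℝ} (hα : α ∈ Icc 0 π) (hφ : φ ∈ Ico 0 (2 * π)) :
    cos α ≤ cos φ ↔ φ ≤ α ∨ 2 * π - α ≤ φ := by
  obtain ⟨hα0, hαπ⟩ := hα
  obtain ⟨hφ0, hφ2π⟩ := hφ
  rcases le_total φ π with hφπ | hπφ
  · rw [strictAntiOn_cos.le_iff_ge ⟨hα0, hαπ⟩ ⟨hφ0, hφπ⟩]
    constructor
    · exact Or.inl
    · rintro (h | h) <;> linarith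
  · rw [← cos_two_pi_sub φ,
      strictAntiOn_cos.le_iff_ge ⟨hα0, hαπ⟩ ⟨by linarith, by linarith⟩]
    constructor
    · intro h; right; linarith
    · rintro (h | h) <;> linarith

theorem Ico_sep_cos_le_cos {α : ℝ} (hα : α ∈ Icc 0 π) :
    {φ ∈ Ico 0 (2 * π) | cos α ≤ cos φ} = Icc 0 α ∪ Ico (2 * π - α) (2 * π) := by
  ext φ
  constructor
  · rintro ⟨hφ, hcos⟩
    rcases (cos_le_cos_iff_of_mem_Ico_two_pi hα hφ).1 hcos with h | h
    · exact Or.inl ⟨hφ.1, h⟩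
    · exact Or.inr ⟨h, hφ.2⟩
  · have hφ : φ ∈ Icc 0 α ∪ Ico (2 * π - α) (2 * π) → φ ∈ Ico 0 (2 * π) := by
      rintro (⟨h₀, h₁⟩ | ⟨h₀, h₁⟩) <;> constructor <;> linarith [hα.1, hα.2, pi_pos]
    intro hmem
    refine ⟨hφ hmem, (cos_le_cos_iff_of_mem_Ico_two_pi hα (hφ hmem)).2 ?_⟩
    rcases hmem with h | h
    exacts [Or.inl h.2, Or.inr h.1]

theorem volume_Ico_sep_cos_le_cos {α : ℝ} (hα : α ∈ Icc 0 π) :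
    volume {φ ∈ Ico 0 (2 * π) | cos α ≤ cos φ} = ENNReal.ofReal (2 * α) := by
  have hdisj : AEDisjoint volume (Icc 0 α) (Ico (2 * π - α) (2 * π)) := by
    refine measure_mono_null (t := Icc (2 * π - α) α) (fun x hx ↦ ⟨hx.2.1, hx.1.2⟩) ?_
    rw [Real.volume_Icc, ENNReal.ofReal_eq_zero]
    linarith [hα.2]
  rw [Ico_sep_cos_le_cos hα, measure_union₀ measurableSet_Ico.nullMeasurableSet hdisj,
    Real.volume_Icc, Real.volume_Ico, sub_zero, sub_sub_cancel, ← ENNReal.ofReal_add hα.1 hα.1,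
    two_mul]

theorem volume_Ico_sep_le_cos (c : ℝ) :
    volume {φ ∈ Ico 0 (2 * π) | c ≤ cos φ} = ENNReal.ofReal (2 * arccos c) := by
  rcases lt_or_ge 1 c with hc1 | hc1
  · have hempty : {φ ∈ Ico 0 (2 * π) | c ≤ cos φ} = ∅ :=
      eq_empty_of_forall_notMem fun φ hφ ↦ (hc1.trans_le hφ.2).not_ge (cos_le_one φ)
    rw [hempty, arccos_of_one_le hc1.le, mul_zero, ENNReal.ofReal_zero, measure_empty]
  · have hcos : ∀ φ, c ≤ cos φ ↔ cos (arccos c) ≤ cos φ := by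
      rcases le_total (-1) c with hc | hc
      · simp only [cos_arccos hc hc1, implies_true]
      · intro φ
        rw [arccos_of_le_neg_one hc, cos_pi]
        exact iff_of_true (hc.trans (neg_one_le_cos φ)) (neg_one_le_cos φ)
    simp_rw [hcos]
    exact volume_Ico_sep_cos_le_cos ⟨arccos_nonneg c, arccos_le_pi c⟩

theorem sqrt_law_of_cosines_le_iff {r s d φ : ℝ} (hrs : 0 < r * s) (hd : 0 ≤ d) :
    √(r ^ 2 + s ^ 2 - 2 * r * s * cos φ) ≤ d ↔ (r ^ 2 + s ^ 2 - d ^ 2) / (2 * r * s) ≤ cos φ := by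
  rw [sqrt_le_left hd, div_le_iff₀ (by linarith)]
  constructor <;> intro h <;> linarith

end Real

theorem contact_probability_general (ri rj d : ℝ) (hri : 0 < ri) (hrj : 0 < rj)
    (hd1 : |ri - rj| ≤ d) :
    (volume {φ ∈ Set.Ico (0 : ℝ) (2 * π) |
        Real.sqrt (ri ^ 2 + rj ^ 2 - 2 * ri * rj * Real.cos φ) ≤ d}).toReal
      / (2 * π)
      = (1 / π) * Real.arccos ((ri ^ 2 + rj ^ 2 - d ^ 2) / (2 * ri * rj)) := by
  have hd : 0 ≤ d := (abs_nonneg _).trans hd1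
  simp_rw [sqrt_law_of_cosines_le_iff (mul_pos hri hrj) hd]
  rw [volume_Ico_sep_le_cos, ENNReal.toReal_ofReal (mul_nonneg zero_le_two (arccos_nonneg _))]
  field_simp

/-- For two UAVs on concentric circles of radii `rᵢ, rⱼ` with uniformly
distributed angular phase difference on `[0, 2π)`, the probability that their
distance is at most `d` equals `(1/π)·arccos((rᵢ² + rⱼ² − d²)/(2 rᵢ rⱼ))`,
provided `|rᵢ − rⱼ| ≤ d ≤ rᵢ + rⱼ`. -/
theorem contact_probability (ri rj d : ℝ) (hri : 0 < ri) (hrj : 0 < rj)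
    (hd1 : |ri - rj| ≤ d) (hd2 : d ≤ ri + rj) :
    (volume {φ ∈ Set.Ico (0 : ℝ) (2 * π) |
        Real.sqrt (ri ^ 2 + rj ^ 2 - 2 * ri * rj * Real.cos φ) ≤ d}).toReal
      / (2 * π)
      = (1 / π) * Real.arccos ((ri ^ 2 + rj ^ 2 - d ^ 2) / (2 * ri * rj)) :=
  contact_probability_general ri rj d hri hrj hd1
end
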